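/- arXiv:2503.18677 — 2 statements merged into one kernel-verified Lean document; each statement's English description precedes it below -/
import Mathlib

section
/- For every integer n \ge 1, with \bar\mu(n) = (n^2+n+2)/(n+2), one has p_s(n+\mu) \ge p_f(n) for 0 < \mu \le \bar\mu(n) and p_s(n+\mu) \le p_f(n) for \mu \ge \bar\mu(n), where p_s(z) = (z+1+\sqrt{z^2+10z-7})/(2(z-1)) and p_f(n) = 1 + 2/n. In particular, max{p_s(n+\mu), p_f(n)} = p_s(n+\mu) when 0 < \mu \le \bar\mu(n). -/
/-!
With `z = n + μ` and `s = √(z² + 10z - 7)`, clearing denominators turns `p_f(n) ≤ p_s(z)` into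
`(n + 4)z - (3n + 4) ≤ n s`. Both sides have positive sum, and the difference of their squares
factors as `8 (z - 1) ((2n² + 3n + 2) - (n + 2)z)`, so the comparison flips exactly at
`z = (2n² + 3n + 2)/(n + 2)`, i.e. at `μ = μ̄(n)`.
-/

open Real

noncomputable def straussIndex (z : ℝ) : ℝ :=
  (z + 1 + √(z ^ 2 + 10 * z - 7)) / (2 * (z - 1))

noncomputable def fujitaIndex (n : ℝ) : ℝ := 1 + 2 / n

section

variable {n z : ℝ}

lemma two_lt_sqrt_strauss_discr (hz : 1 < z) : 2 < √(z ^ 2 + 10 * z - 7) := by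
  rw [lt_sqrt (by norm_num)]
  nlinarith

lemma strauss_conjugate_pos (hn : 0 < n) (hz : 1 < z) :
    0 < n * √(z ^ 2 + 10 * z - 7) + ((n + 4) * z - (3 * n + 4)) := by
  nlinarith [two_lt_sqrt_strauss_discr hz]

lemma straussIndex_sub_fujitaIndex (hn : 0 < n) (hz : 1 < z) :
    straussIndex z - fujitaIndex n =
      4 * ((2 * n ^ 2 + 3 * n + 2) - (n + 2) * z) /
        (n * (n * √(z ^ 2 + 10 * z - 7) + ((n + 4) * z - (3 * n + 4)))) := by
  have hconj := strauss_conjugate_pos hn hz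
  have hsq : √(z ^ 2 + 10 * z - 7) ^ 2 = z ^ 2 + 10 * z - 7 :=
    sq_sqrt (by nlinarith)
  have hz1 : z - 1 ≠ 0 := by linarith
  rw [eq_div_iff (mul_pos hn hconj).ne']
  unfold straussIndex fujitaIndex
  generalize √(z ^ 2 + 10 * z - 7) = s at hsq ⊢
  field_simp
  linear_combination n ^ 2 * hsq

lemma fujitaIndex_le_straussIndex_iff (hn : 0 < n) (hz : 1 < z) :
    fujitaIndex n ≤ straussIndex z ↔ (n + 2) * z ≤ 2 * n ^ 2 + 3 * n + 2 := by
  rw [← sub_nonneg, straussIndex_sub_fujitaIndex hn hz,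
    le_div_iff₀ (mul_pos hn (strauss_conjugate_pos hn hz)), zero_mul]
  constructor <;> intro h <;> linarith

lemma straussIndex_le_fujitaIndex_iff (hn : 0 < n) (hz : 1 < z) :
    straussIndex z ≤ fujitaIndex n ↔ 2 * n ^ 2 + 3 * n + 2 ≤ (n + 2) * z := by
  rw [← sub_nonpos, straussIndex_sub_fujitaIndex hn hz,
    div_le_iff₀ (mul_pos hn (strauss_conjugate_pos hn hz)), zero_mul]
  constructor <;> intro h <;> linarith

end

/-- Comparison of the Strauss index `p_s(n+μ)` with the Fujita index `p_f(n) = 1 + 2/n`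
around the threshold `μ̄(n) = (n^2+n+2)/(n+2)`. -/
theorem strauss_fujita_comparison (n : ℕ) (hn : 1 ≤ n) (μ : ℝ) (hμ : 0 < μ)
    (ps pf μbar : ℝ)
    (hps : ps = ((n + μ) + 1 + Real.sqrt ((n + μ) ^ 2 + 10 * (n + μ) - 7)) /
      (2 * ((n + μ) - 1)))
    (hpf : pf = 1 + 2 / n)
    (hbar : μbar = ((n : ℝ) ^ 2 + n + 2) / (n + 2)) :
    (μ ≤ μbar → pf ≤ ps) ∧ (μbar ≤ μ → ps ≤ pf) ∧
      (μ ≤ μbar → max ps pf = ps) := by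
  have hn0 : (0 : ℝ) < n := by exact_mod_cast hn
  have hz : 1 < (n : ℝ) + μ := by
    have : (1 : ℝ) ≤ n := by exact_mod_cast hn
    linarith
  have hn2 : (0 : ℝ) < n + 2 := by linarith
  replace hps : ps = straussIndex (n + μ) := hps
  replace hpf : pf = fujitaIndex n := hpf
  subst hps hpf hbar
  have below (h : μ ≤ ((n : ℝ) ^ 2 + n + 2) / (n + 2)) :
      fujitaIndex n ≤ straussIndex (n + μ) := by
    rw [le_div_iff₀ hn2] at h
    exact (fujitaIndex_le_straussIndex_iff hn0 hz).2 (by linarith)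
  refine ⟨below, fun h => ?_, fun h => max_eq_left (below h)⟩
  rw [div_le_iff₀ hn2] at h
  exact (straussIndex_le_fujitaIndex_iff hn0 hz).2 (by linarith)
end

section
/- Let m > 0 and \alpha \in \mathbb{R}. Define p_1(2,m,\alpha) = 1 + (2+\alpha)/(m+1) and let p_2(2,m,\alpha) be the positive root of (m+1)p^2 - (3+2\alpha)p - (m+2) = 0. Then for \alpha > -1 one has p_2(2,m,\alpha) \ge p_1(2,m,\alpha), and for -2 < \alpha \le -1 one has p_1(2,m,\alpha) \ge p_2(2,m,\alpha). -/
/-!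
Both exponents are compared through the quadratic `f(p) = (m+1)p² - (3+2α)p - (m+2)`, whose
larger root is `p₂`. A direct computation gives `f(p₁) = -(2+α)(1+α)/(m+1)`. For `α > -1` this is
negative, so `p₁` lies between the roots and `p₁ ≤ p₂`. For `-2 < α ≤ -1` it is nonnegative and
`p₁ > 0`, while the smaller root is negative (the product of the roots is `-(m+2)/(m+1)`), so
`p₁ ≥ p₂`.
-/

/-- The larger root of `a x² - b x - c` when `0 < a`. -/
noncomputable def upperRoot (a b c : ℝ) : ℝ :=
  (b + √(b ^ 2 + 4 * a * c)) / (2 * a)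

section UpperRoot

variable {a b c x : ℝ}

lemma quadratic_complete_square (a b c x : ℝ) :
    (2 * a * x - b) ^ 2 = b ^ 2 + 4 * a * c + 4 * a * (a * x ^ 2 - b * x - c) := by
  ring

lemma le_upperRoot_of_nonpos (ha : 0 < a) (hf : a * x ^ 2 - b * x - c ≤ 0) :
    x ≤ upperRoot a b c := by
  have hsq : (2 * a * x - b) ^ 2 ≤ b ^ 2 + 4 * a * c := by
    rw [quadratic_complete_square a b c x]
    nlinarith
  have hle : 2 * a * x - b ≤ √(b ^ 2 + 4 * a * c) :=
    (le_abs_self _).trans (Real.abs_le_sqrt hsq)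
  rw [upperRoot, le_div_iff₀ (by positivity)]
  linarith

lemma upperRoot_le_of_nonneg (ha : 0 < a) (hc : 0 < c) (hx : 0 ≤ x)
    (hf : 0 ≤ a * x ^ 2 - b * x - c) : upperRoot a b c ≤ x := by
  have hsq : b ^ 2 + 4 * a * c ≤ (2 * a * x - b) ^ 2 := by
    rw [quadratic_complete_square a b c x]
    nlinarith
  -- Since `(2ax - b)² > b²` and `x ≥ 0`, the number `2ax - b` cannot be negative.
  have hpos : 0 ≤ 2 * a * x - b := by
    by_contra! hneg
    nlinarith [mul_nonneg ha.le hx]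
  have hle : √(b ^ 2 + 4 * a * c) ≤ 2 * a * x - b := (Real.sqrt_le_left hpos).2 hsq
  rw [upperRoot, div_le_iff₀ (by positivity)]
  linarith

end UpperRoot

lemma tricomi_quadratic_at_p1 {m : ℝ} (hm : m + 1 ≠ 0) (α : ℝ) :
    (m + 1) * (1 + (2 + α) / (m + 1)) ^ 2 - (3 + 2 * α) * (1 + (2 + α) / (m + 1)) - (m + 2) =
      -((2 + α) * (1 + α)) / (m + 1) := by
  field_simp
  ring

/-- Comparison of the two candidate critical exponents `p_1(2,m,α)` and `p_2(2,m,α)`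
for the 2-D generalized Tricomi equation. -/
theorem p1_p2_comparison (m α : ℝ) (hm : 0 < m)
    (p1 p2 : ℝ)
    (hp1 : p1 = 1 + (2 + α) / (m + 1))
    (hp2 : p2 = (3 + 2 * α + Real.sqrt ((3 + 2 * α) ^ 2 + 4 * (m + 1) * (m + 2))) /
      (2 * (m + 1))) :
    (-1 < α → p1 ≤ p2) ∧ (-2 < α → α ≤ -1 → p2 ≤ p1) := by
  have hm1 : 0 < m + 1 := by linarith
  have hp2 : p2 = upperRoot (m + 1) (3 + 2 * α) (m + 2) := hp2
  have hf := tricomi_quadratic_at_p1 hm1.ne' α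
  rw [← hp1] at hf
  refine ⟨fun hα => ?_, fun hα2 hα1 => ?_⟩
  · rw [hp2]
    refine le_upperRoot_of_nonpos hm1 (hf ▸ div_nonpos_of_nonpos_of_nonneg ?_ hm1.le)
    nlinarith
  · have hp1_pos : 0 ≤ p1 := by
      rw [hp1]
      have : 0 < (2 + α) / (m + 1) := div_pos (by linarith) hm1
      linarith
    rw [hp2]
    refine upperRoot_le_of_nonneg hm1 (by linarith) hp1_pos (hf ▸ div_nonneg ?_ hm1.le)
    nlinarith
end
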